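/- With the same data as the one-soliton construction, define g₂ = r e^{iφ}(1 + a b e^{η₁+conj η₁}) with φ = p x - ((μ+λ)/p) t + φ₀ and b = ((k₁-ip)(conj k₁ - ip))/((k₁+ip)(conj k₁ + ip)). Then D_x D_t (g₂·f) = (μ+λ) g₂ f holds identically, where f = 1 + a e^{η₁+conj η₁}. -/

import Mathlib

/-! The phases `iφ = P x + Q t + R` and `ξ = η₁ + conj η₁ = K x + L t + c` are affine, so
`g₂ = r e^{iφ} (1 + a b e^ξ)` and `f = 1 + a e^ξ` are polynomials in two exponentials. Since `D_x D_t (e^{θ₁}·e^{θ₂})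
= (P₁ - P₂)(Q₁ - Q₂) e^{θ₁+θ₂}` and `P Q = μ + λ`, all terms of `D_x D_t (g₂·f) - (μ+λ) g₂ f` cancel
except a multiple of `e^{iφ+ξ}` with coefficient `b (PL + QK + KL) - (PL + QK - KL)`, and this
vanishes by the choice of `b`. -/

/-- The Hirota bilinear operator `D_x D_t (g·f) = g_{xt} f - g_x f_t - g_t f_x + g f_{xt}`. -/
noncomputable def hirotaDxDt (g f : ℝ → ℝ → ℂ) (x t : ℝ) : ℂ :=
  deriv (fun x' => deriv (fun t' => g x' t') t) x * f x t
  - deriv (fun x' => g x' t) x * deriv (fun t' => f x t') t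
  - deriv (fun t' => g x t') t * deriv (fun x' => f x' t) x
  + g x t * deriv (fun x' => deriv (fun t' => f x' t') t) x

noncomputable def planeWave (P Q R : ℂ) (x t : ℝ) : ℂ :=
  Complex.exp (P * x + Q * t + R)

section PlaneWave

variable (P Q R : ℂ) (x t : ℝ)

theorem hasDerivAt_planeWave_x :
    HasDerivAt (fun x' => planeWave P Q R x' t) (P * planeWave P Q R x t) x := by
  have h : HasDerivAt (fun x' : ℝ => P * (x' : ℂ) + Q * t + R) P x := by
    simpa using ((Complex.ofRealCLM.hasDerivAt (x := x)).const_mul P).add_const (Q * t + R)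
  simpa [planeWave, mul_comm] using h.cexp

theorem hasDerivAt_planeWave_t :
    HasDerivAt (fun t' => planeWave P Q R x t') (Q * planeWave P Q R x t) t := by
  have h : HasDerivAt (fun t' : ℝ => P * (x : ℂ) + Q * t' + R) Q t := by
    simpa using (((Complex.ofRealCLM.hasDerivAt (x := t)).const_mul Q).const_add
      (P * x)).add_const R
  simpa [planeWave, mul_comm] using h.cexp

end PlaneWave

theorem hirotaDxDt_planeWave_soliton (P Q R K L c r a b : ℂ)
    (hb : b * (P * L + Q * K + K * L) = P * L + Q * K - K * L) (x t : ℝ) :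
    hirotaDxDt (fun x t => r * planeWave P Q R x t * (1 + a * b * planeWave K L c x t))
        (fun x t => 1 + a * planeWave K L c x t) x t
      = P * Q * (r * planeWave P Q R x t * (1 + a * b * planeWave K L c x t))
          * (1 + a * planeWave K L c x t) := by
  set E := planeWave P Q R
  set F := planeWave K L c
  have hg_t (x' : ℝ) : HasDerivAt (fun t' => r * E x' t' * (1 + a * b * F x' t'))
      (r * (Q * E x' t) * (1 + a * b * F x' t) + r * E x' t * (a * b * (L * F x' t))) t :=
    ((hasDerivAt_planeWave_t P Q R x' t).const_mul r).mul
      (((hasDerivAt_planeWave_t K L c x' t).const_mul (a * b)).const_add 1)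
  have hg_x : HasDerivAt (fun x' => r * E x' t * (1 + a * b * F x' t))
      (r * (P * E x t) * (1 + a * b * F x t) + r * E x t * (a * b * (K * F x t))) x :=
    ((hasDerivAt_planeWave_x P Q R x t).const_mul r).mul
      (((hasDerivAt_planeWave_x K L c x t).const_mul (a * b)).const_add 1)
  have hg_xt : HasDerivAt
      (fun x' => r * (Q * E x' t) * (1 + a * b * F x' t) + r * E x' t * (a * b * (L * F x' t)))
      (r * (Q * (P * E x t)) * (1 + a * b * F x t) + r * (Q * E x t) * (a * b * (K * F x t))
        + (r * (P * E x t) * (a * b * (L * F x t)) + r * E x t * (a * b * (L * (K * F x t))))) x :=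
    ((((hasDerivAt_planeWave_x P Q R x t).const_mul Q).const_mul r).mul
      (((hasDerivAt_planeWave_x K L c x t).const_mul (a * b)).const_add 1)).add
    (((hasDerivAt_planeWave_x P Q R x t).const_mul r).mul
      (((hasDerivAt_planeWave_x K L c x t).const_mul L).const_mul (a * b)))
  have hf_t (x' : ℝ) : HasDerivAt (fun t' => 1 + a * F x' t') (a * (L * F x' t)) t :=
    ((hasDerivAt_planeWave_t K L c x' t).const_mul a).const_add 1
  have hf_x : HasDerivAt (fun x' => 1 + a * F x' t) (a * (K * F x t)) x :=
    ((hasDerivAt_planeWave_x K L c x t).const_mul a).const_add 1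
  have hf_xt : HasDerivAt (fun x' => a * (L * F x' t)) (a * (L * (K * F x t))) x :=
    ((hasDerivAt_planeWave_x K L c x t).const_mul L).const_mul a
  rw [hirotaDxDt, funext fun x' => (hg_t x').deriv, funext fun x' => (hf_t x').deriv,
    hg_xt.deriv, hf_xt.deriv, hg_x.deriv, hf_x.deriv, (hg_t x).deriv, (hf_t x).deriv]
  linear_combination r * a * E x t * F x t * hb

theorem phase_shift_identity (k k' u m : ℂ) (hk : k ≠ 0) (hk' : k' ≠ 0) (hu : u ≠ 0)
    (hku : k + u ≠ 0) (hk'u : k' + u ≠ 0) :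
    (k - u) * (k' - u) / ((k + u) * (k' + u))
        * (u * (m / k + m / k') + m / u * (k + k') + (k + k') * (m / k + m / k'))
      = u * (m / k + m / k') + m / u * (k + k') - (k + k') * (m / k + m / k') := by
  field_simp
  ring

open ComplexConjugate in
theorem add_I_mul_ne_zero_of_sq_add_sq_ne_zero {k : ℂ} {p : ℝ} (h : (p : ℂ) ^ 2 + k ^ 2 ≠ 0) :
    k + Complex.I * p ≠ 0 ∧ conj k + Complex.I * p ≠ 0 := by
  have hfac : (p : ℂ) ^ 2 + k ^ 2 = (k + Complex.I * p) * (k - Complex.I * p) := by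
    linear_combination (p : ℂ) ^ 2 * Complex.I_sq
  rw [hfac, mul_ne_zero_iff] at h
  refine ⟨h.1, ?_⟩
  simpa using (map_ne_zero conj).mpr h.2

open ComplexConjugate in
theorem add_conj_of_eq_linear {η k η₀ : ℂ} {ν x t : ℝ} (h : η = k * x + (ν : ℂ) / k * t + η₀) :
    η + conj η = (k + conj k) * x + (ν / k + ν / conj k) * t + (η₀ + conj η₀) := by
  subst h
  simp only [map_add, map_mul, map_div₀, Complex.conj_ofReal]
  ring

theorem I_mul_ofReal_linear {p : ℝ} (hp : p ≠ 0) (ν φ₀ x t : ℝ) :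
    Complex.I * ((p * x - ν / p * t + φ₀ : ℝ) : ℂ)
      = Complex.I * p * x + ν / (Complex.I * p) * t + Complex.I * φ₀ := by
  have : (p : ℂ) ≠ 0 := by exact_mod_cast hp
  push_cast
  field_simp
  linear_combination -(ν : ℂ) * t * Complex.I_sq

theorem stmt5_general (k₁ η₁₀ : ℂ) (p r μ lam φ₀ : ℝ)
    (hk : k₁.re ≠ 0) (hp : p ≠ 0)
    (hpk : (p : ℂ) ^ 2 + k₁ ^ 2 ≠ 0)
    (a : ℂ)
    (b : ℂ) (hb : b = ((k₁ - Complex.I * p) * ((starRingEnd ℂ) k₁ - Complex.I * p)) /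
      ((k₁ + Complex.I * p) * ((starRingEnd ℂ) k₁ + Complex.I * p)))
    (η₁ : ℝ → ℝ → ℂ)
    (hη : ∀ x t : ℝ, η₁ x t = k₁ * x + (((μ + lam : ℝ) : ℂ) / k₁) * t + η₁₀)
    (φ : ℝ → ℝ → ℝ)
    (hφ : ∀ x t : ℝ, φ x t = p * x - ((μ + lam) / p) * t + φ₀)
    (g₂ f : ℝ → ℝ → ℂ)
    (hg₂ : ∀ x t : ℝ, g₂ x t = (r : ℂ) * Complex.exp (Complex.I * (φ x t : ℂ)) *
      (1 + a * b * Complex.exp (η₁ x t + (starRingEnd ℂ) (η₁ x t))))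
    (hf : ∀ x t : ℝ, f x t = 1 + a * Complex.exp (η₁ x t + (starRingEnd ℂ) (η₁ x t))) :
    ∀ x t : ℝ, hirotaDxDt g₂ f x t = ((μ + lam : ℝ) : ℂ) * g₂ x t * f x t := by
  intro x t
  set m : ℂ := ((μ + lam : ℝ) : ℂ)
  set u : ℂ := Complex.I * p
  set k₁' := (starRingEnd ℂ) k₁
  set K := k₁ + k₁'
  set L := m / k₁ + m / k₁'
  set c := η₁₀ + (starRingEnd ℂ) η₁₀
  have hk₁ : k₁ ≠ 0 := fun h => hk (by simp [h])
  have hk₁' : k₁' ≠ 0 := (map_ne_zero _).mpr hk₁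
  have hu : u ≠ 0 := mul_ne_zero Complex.I_ne_zero (by exact_mod_cast hp)
  obtain ⟨hk₁u, hk₁'u⟩ := add_I_mul_ne_zero_of_sq_add_sq_ne_zero hpk
  have hg₂' : g₂ = fun x t => r * planeWave u (m / u) (Complex.I * φ₀) x t
      * (1 + a * b * planeWave K L c x t) := by
    ext x t
    rw [hg₂, hφ, I_mul_ofReal_linear hp, add_conj_of_eq_linear (hη x t)]
    rfl
  have hf' : f = fun x t => 1 + a * planeWave K L c x t := by
    ext x t
    rw [hf, add_conj_of_eq_linear (hη x t)]
    rfl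
  have hshift := phase_shift_identity k₁ k₁' u m hk₁ hk₁' hu hk₁u hk₁'u
  rw [← hb] at hshift
  rw [hg₂', hf', hirotaDxDt_planeWave_soliton _ _ _ _ _ _ _ _ _ hshift, mul_div_cancel₀ _ hu]

/-- One-soliton verification of the dark-component bilinear equation:
with `g₂ = r e^{iφ}(1 + a b e^{η₁+conj η₁})`, `φ = p x - ((μ+λ)/p) t + φ₀`,
`b = ((k₁-ip)(conj k₁ - ip))/((k₁+ip)(conj k₁ + ip))`, `f = 1 + a e^{η₁+conj η₁}`,
one has `D_x D_t (g₂·f) = (μ+λ) g₂ f`. -/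
theorem stmt5 (k₁ η₁₀ : ℂ) (p r σ μ lam φ₀ : ℝ)
    (hk : k₁.re ≠ 0) (hml : μ + lam ≠ 0) (hp : p ≠ 0)
    (hpk : (p : ℂ) ^ 2 + k₁ ^ 2 ≠ 0)
    (C : ℝ) (hC : C = 2 / σ + 4 * p ^ 2 * r ^ 2 / ‖(p : ℂ) ^ 2 + k₁ ^ 2‖ ^ 2)
    (hCpos : 0 < C)
    (a : ℂ) (ha : a = 1 / ((k₁ + (starRingEnd ℂ) k₁) ^ 2 * (C : ℂ)))
    (b : ℂ) (hb : b = ((k₁ - Complex.I * p) * ((starRingEnd ℂ) k₁ - Complex.I * p)) /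
      ((k₁ + Complex.I * p) * ((starRingEnd ℂ) k₁ + Complex.I * p)))
    (η₁ : ℝ → ℝ → ℂ)
    (hη : ∀ x t : ℝ, η₁ x t = k₁ * x + (((μ + lam : ℝ) : ℂ) / k₁) * t + η₁₀)
    (φ : ℝ → ℝ → ℝ)
    (hφ : ∀ x t : ℝ, φ x t = p * x - ((μ + lam) / p) * t + φ₀)
    (g₂ f : ℝ → ℝ → ℂ)
    (hg₂ : ∀ x t : ℝ, g₂ x t = (r : ℂ) * Complex.exp (Complex.I * (φ x t : ℂ)) *
      (1 + a * b * Complex.exp (η₁ x t + (starRingEnd ℂ) (η₁ x t))))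
    (hf : ∀ x t : ℝ, f x t = 1 + a * Complex.exp (η₁ x t + (starRingEnd ℂ) (η₁ x t))) :
    ∀ x t : ℝ, hirotaDxDt g₂ f x t = ((μ + lam : ℝ) : ℂ) * g₂ x t * f x t :=
  stmt5_general k₁ η₁₀ p r μ lam φ₀ hk hp hpk a b hb η₁ hη φ hφ g₂ f hg₂ hf
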